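/- In a finite abstract argumentation framework, whether the default argument belongs to the grounded extension depends only on the arguments from which there is a directed attack path to the default argument: if two AFs agree on the set of arguments with a path to the default and on all attacks among those arguments, then the default is in the grounded extension of one iff it is in the grounded extension of the other. -/

import Mathlib

/-- `E` defends `a` in the AF `(Args, att)` iff `a ∈ Args` and every attacker of `a`
in `Args` is attacked by some member of `E`. -/
def Defends {A : Type*} (Args : Set A) (att : A → A → Prop) (E : Set A) (a : A) : Prop :=
  a ∈ Args ∧ ∀ b ∈ Args, att b a → ∃ c ∈ E, att c b

/-- Approximation sequence of the grounded extension. -/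
def Gseq {A : Type*} (Args : Set A) (att : A → A → Prop) : ℕ → Set A
  | 0 => {a | a ∈ Args ∧ ∀ b ∈ Args, ¬ att b a}
  | i + 1 => {a | Defends Args att (Gseq Args att i) a}

/-- The grounded extension `G = ⋃ i, G i`. -/
def grounded {A : Type*} (Args : Set A) (att : A → A → Prop) : Set A :=
  ⋃ i, Gseq Args att i

/-- The set of arguments of the AF from which there is a directed attack path
(possibly empty) to `d`, all of whose members are arguments of the AF. -/
def reachSet {A : Type*} (Args : Set A) (att : A → A → Prop) (d : A) : Set A :=
  {a | a ∈ Args ∧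
    Relation.ReflTransGen (fun x y => x ∈ Args ∧ y ∈ Args ∧ att x y) a d}

/-!
Membership of `a` in the `i`-th approximant `G_i` is decided by the attackers of `a`, their
attackers, and so on, i.e. only inside a set that no outside argument attacks. The arguments
with a path to `d` form such a set in both frameworks, so by induction on `i` the two
approximation sequences agree on it.
-/

def IsUnattacked {A : Type*} (Args : Set A) (att : A → A → Prop) (R : Set A) : Prop :=
  R ⊆ Args ∧ ∀ b ∈ R, ∀ c ∈ Args, att c b → c ∈ R

section

variable {A : Type*} {Args Args1 Args2 R : Set A} {att att1 att2 : A → A → Prop}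

lemma Gseq_subset : ∀ i, Gseq Args att i ⊆ Args
  | 0 => fun _ ha => ha.1
  | _ + 1 => fun _ ha => ha.1

lemma grounded_subset : grounded Args att ⊆ Args :=
  Set.iUnion_subset Gseq_subset

lemma mem_reachSet_self {d : A} (hd : d ∈ Args) : d ∈ reachSet Args att d :=
  ⟨hd, .refl⟩

lemma isUnattacked_reachSet (Args : Set A) (att : A → A → Prop) (d : A) :
    IsUnattacked Args att (reachSet Args att d) :=
  ⟨fun _ ha => ha.1, fun _ ⟨hb, hpath⟩ _ hc hcb => ⟨hc, .head ⟨hc, hb, hcb⟩ hpath⟩⟩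

lemma IsUnattacked.attack_of_attack (h1 : IsUnattacked Args1 att1 R)
    (h2 : IsUnattacked Args2 att2 R) (hatt : ∀ a ∈ R, ∀ b ∈ R, (att1 a b ↔ att2 a b))
    {b c : A} (hb : b ∈ R) (hc : c ∈ Args2) (hcb : att2 c b) :
    c ∈ R ∧ c ∈ Args1 ∧ att1 c b := by
  have hcR := h2.2 b hb c hc hcb
  exact ⟨hcR, h1.1 hcR, (hatt c hcR b hb).mpr hcb⟩

lemma IsUnattacked.mem_Gseq_of_mem_Gseq (h1 : IsUnattacked Args1 att1 R)
    (h2 : IsUnattacked Args2 att2 R) (hatt : ∀ a ∈ R, ∀ b ∈ R, (att1 a b ↔ att2 a b)) :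
    ∀ i, ∀ a ∈ R, a ∈ Gseq Args1 att1 i → a ∈ Gseq Args2 att2 i
  | 0, a, ha, ⟨_, hunatt⟩ => by
    refine ⟨h2.1 ha, fun b hb hba => ?_⟩
    obtain ⟨-, hb1, hba1⟩ := h1.attack_of_attack h2 hatt ha hb hba
    exact hunatt b hb1 hba1
  | i + 1, a, ha, ⟨_, hdef⟩ => by
    refine ⟨h2.1 ha, fun b hb hba => ?_⟩
    obtain ⟨hbR, hb1, hba1⟩ := h1.attack_of_attack h2 hatt ha hb hba
    obtain ⟨c, hc, hcb⟩ := hdef b hb1 hba1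
    have hcR := h1.2 b hbR c (Gseq_subset i hc) hcb
    exact ⟨c, h1.mem_Gseq_of_mem_Gseq h2 hatt i c hcR hc, (hatt c hcR b hbR).mp hcb⟩

lemma IsUnattacked.mem_grounded_of_mem_grounded (h1 : IsUnattacked Args1 att1 R)
    (h2 : IsUnattacked Args2 att2 R) (hatt : ∀ a ∈ R, ∀ b ∈ R, (att1 a b ↔ att2 a b))
    {a : A} (ha : a ∈ R) (hg : a ∈ grounded Args1 att1) : a ∈ grounded Args2 att2 := by
  obtain ⟨i, hi⟩ := Set.mem_iUnion.mp hg
  exact Set.mem_iUnion.mpr ⟨i, h1.mem_Gseq_of_mem_Gseq h2 hatt i a ha hi⟩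

end

theorem grounded_default_depends_on_reach_general {A : Type*}
    (Args1 Args2 : Set A) (att1 att2 : A → A → Prop) (d : A)
    (hreach : reachSet Args1 att1 d = reachSet Args2 att2 d)
    (hatt : ∀ a ∈ reachSet Args1 att1 d, ∀ b ∈ reachSet Args1 att1 d,
      (att1 a b ↔ att2 a b)) :
    (d ∈ grounded Args1 att1 ↔ d ∈ grounded Args2 att2) := by
  have hR1 := isUnattacked_reachSet Args1 att1 d
  have hR2 : IsUnattacked Args2 att2 (reachSet Args1 att1 d) :=
    hreach ▸ isUnattacked_reachSet Args2 att2 d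
  constructor
  · intro hd
    exact hR1.mem_grounded_of_mem_grounded hR2 hatt (mem_reachSet_self (grounded_subset hd)) hd
  · intro hd
    have hdR : d ∈ reachSet Args1 att1 d := hreach ▸ mem_reachSet_self (grounded_subset hd)
    exact hR2.mem_grounded_of_mem_grounded hR1 (fun a ha b hb => (hatt a ha b hb).symm) hdR hd

/-- Whether the default argument `d` belongs to the grounded extension depends only on
the arguments with a directed attack path to `d` and the attacks among them. -/
theorem grounded_default_depends_on_reach {A : Type*} [Finite A]
    (Args1 Args2 : Set A) (att1 att2 : A → A → Prop) (d : A)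
    (hreach : reachSet Args1 att1 d = reachSet Args2 att2 d)
    (hatt : ∀ a ∈ reachSet Args1 att1 d, ∀ b ∈ reachSet Args1 att1 d,
      (att1 a b ↔ att2 a b)) :
    (d ∈ grounded Args1 att1 ↔ d ∈ grounded Args2 att2) :=
  grounded_default_depends_on_reach_general Args1 Args2 att1 att2 d hreach hatt
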